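/- Let Σ be a schema and T a guarded TGD over Σ. If a Σ-instance I satisfies T and I' is obtained from I by cloning constants, then I' satisfies T. -/

import Mathlib

/-!
Folding every clone back onto its original constant is a homomorphism `I' → I` that fixes
`adom I`. A body match into `I'` therefore folds to a body match into `I`, which `I` extends to a
head match. If the guard atom is matched into `I`, all body values lie in `adom I`, so the body
match was already one into `I`. Otherwise the guard atom is matched onto a proper clone, so every
body value is an unchosen constant or a clone, and the head match in `I` is cloned back position
by position (existential values that were chosen go to their first clone). A frontier variable
absent from the body cannot take a chosen value: it could then take any value, forcing every
constant, fresh clones included, into `adom I`.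
-/

namespace DB

/-- A relational schema: a finite set of relation symbols with arities. -/
structure Schema where
  Rel : Type
  ar : Rel → ℕ
  relFinite : Finite Rel

/-- A fact over a schema `S` with constants from `C`. -/
abbrev Fact (S : Schema) (C : Type) : Type := (R : S.Rel) × (Fin (S.ar R) → C)

/-- An instance over schema `S` with constants from `C`: a set of facts. -/
abbrev Inst (S : Schema) (C : Type) : Type := Set (Fact S C)

/-- The active domain of an instance: the constants occurring in its facts. -/
def adom {S : Schema} {C : Type} (I : Inst S C) : Set C :=
  {c | ∃ f ∈ I, ∃ i, f.2 i = c}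

/-- A tuple-generating dependency `∀x̄∀ȳ (φ(x̄,ȳ) → ∃z̄ ψ(x̄,z̄))`:
`X` are the frontier variables, `Y` the body-only variables, `Z` the
existential head variables; body and head are conjunctions (sets) of atoms. -/
structure TGD (S : Schema) where
  X : Type
  Y : Type
  Z : Type
  finX : Finite X
  finY : Finite Y
  finZ : Finite Z
  body : Set (Fact S (X ⊕ Y))
  head : Set (Fact S (X ⊕ Z))

/-- Satisfaction of a TGD by an instance: every assignment making all body
atoms facts of the instance extends to one making all head atoms facts. -/
def tgdSat {S : Schema} {C : Type} (I : Inst S C) (T : TGD S) : Prop :=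
  ∀ (a : T.X → C) (b : T.Y → C),
    (∀ A ∈ T.body, (⟨A.1, Sum.elim a b ∘ A.2⟩ : Fact S C) ∈ I) →
    ∃ c : T.Z → C, ∀ A ∈ T.head, (⟨A.1, Sum.elim a c ∘ A.2⟩ : Fact S C) ∈ I

/-- A TGD is full if it has no existential head variables. -/
def TGD.IsFull {S : Schema} (T : TGD S) : Prop := IsEmpty T.Z

/-- A TGD is guarded if its body is `true` (empty) or contains an atom
mentioning all variables occurring in the body. -/
def TGD.IsGuarded {S : Schema} (T : TGD S) : Prop :=
  T.body = ∅ ∨ ∃ G ∈ T.body, ∀ v : T.X ⊕ T.Y,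
    (∃ A ∈ T.body, ∃ i, A.2 i = v) → ∃ i, G.2 i = v

/-- An instance satisfies every TGD of a set. -/
def satAll {S : Schema} {C : Type} (I : Inst S C) (Ω : Set (TGD S)) : Prop :=
  ∀ T ∈ Ω, tgdSat I T

/-- `chD` is the result of chasing `D` with `Ω`: the least superset of `D`
satisfying every TGD in `Ω`. -/
def IsChase {S : Schema} {C : Type} (Ω : Set (TGD S)) (D chD : Inst S C) : Prop :=
  D ⊆ chD ∧ satAll chD Ω ∧ ∀ J : Inst S C, D ⊆ J → satAll J Ω → chD ⊆ J

/-- The chase of `D` with `Ω`, as the intersection of all supersets of `D`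
satisfying every TGD in `Ω`. -/
def chase {S : Schema} {C : Type} (Ω : Set (TGD S)) (D : Inst S C) : Inst S C :=
  ⋂₀ {J : Inst S C | D ⊆ J ∧ satAll J Ω}

/-- A conjunctive query with `n` answer variables: quantified variables `V`,
a set of relational atoms over the variables `Fin n ⊕ V`, and equality atoms
between answer variables. -/
structure CQ (S : Schema) (n : ℕ) where
  V : Type
  finV : Finite V
  atoms : Set (Fact S (Fin n ⊕ V))
  eqs : Set (Fin n × Fin n)

/-- The canonical database of a CQ: its relational atoms, variables read as
constants. -/
def canonDB {S : Schema} {n : ℕ} (q : CQ S n) : Inst S (Fin n ⊕ q.V) := q.atoms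

/-- A homomorphism from a CQ to an instance: a map from the variables into the
active domain sending every relational atom to a fact and respecting the
equality atoms. -/
def IsHom {S : Schema} {C : Type} {n : ℕ} (q : CQ S n) (I : Inst S C)
    (h : Fin n ⊕ q.V → C) : Prop :=
  (∀ v, h v ∈ adom I) ∧
  (∀ A ∈ q.atoms, (⟨A.1, h ∘ A.2⟩ : Fact S C) ∈ I) ∧
  (∀ e ∈ q.eqs, h (Sum.inl e.1) = h (Sum.inl e.2))

/-- The answer set of a CQ on an instance. -/
def answers {S : Schema} {C : Type} {n : ℕ} (q : CQ S n) (I : Inst S C) :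
    Set (Fin n → C) :=
  {t | ∃ h, IsHom q I h ∧ t = h ∘ Sum.inl}

/-- The chase of a CQ with a set of TGDs: chase the canonical database and
read the facts back as atoms, keeping answer variables and equality atoms. -/
def chaseCQ {S : Schema} {n : ℕ} (Ω : Set (TGD S)) (q : CQ S n) : CQ S n :=
  ⟨q.V, q.finV, chase Ω (canonDB q), q.eqs⟩

/-- The direct product of two instances. -/
def prodInst {S : Schema} {C₁ C₂ : Type} (I₁ : Inst S C₁) (I₂ : Inst S C₂) :
    Inst S (C₁ × C₂) :=
  {f | (⟨f.1, fun i => (f.2 i).1⟩ : Fact S C₁) ∈ I₁ ∧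
       (⟨f.1, fun i => (f.2 i).2⟩ : Fact S C₂) ∈ I₂}

/-- `f'` is obtained from the fact `f` by replacing each occurrence of a
chosen constant `c` by a clone `κ c j` with `1 ≤ j ≤ m c` (occurrences are
replaced independently), other constants being kept. -/
def CloneFact {S : Schema} {C : Type} (chosen : Set C) (m : C → ℕ) (κ : C → ℕ → C)
    (f f' : Fact S C) : Prop :=
  ∃ t' : Fin (S.ar f.1) → C, f' = ⟨f.1, t'⟩ ∧
    ∀ i, (f.2 i ∉ chosen ∧ t' i = f.2 i) ∨
         (f.2 i ∈ chosen ∧ ∃ j, 1 ≤ j ∧ j ≤ m (f.2 i) ∧ t' i = κ (f.2 i) j)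

/-- `I'` is obtained from `I` by cloning constants: choose finitely many
constants of `adom I`, positive numbers of clones, fresh pairwise distinct
clone constants, and add all atoms obtained from atoms of `I` by replacing
each occurrence of each chosen constant by one of its clones. -/
def IsCloneOf {S : Schema} {C : Type} (I I' : Inst S C) : Prop :=
  ∃ (chosen : Set C) (m : C → ℕ) (κ : C → ℕ → C),
    chosen.Finite ∧ chosen ⊆ adom I ∧ (∀ c ∈ chosen, 1 ≤ m c) ∧
    (∀ c ∈ chosen, ∀ j, 1 ≤ j → j ≤ m c → κ c j ∉ adom I) ∧
    (∀ c ∈ chosen, ∀ c' ∈ chosen, ∀ j j', 1 ≤ j → j ≤ m c → 1 ≤ j' → j' ≤ m c' →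
      κ c j = κ c' j' → c = c' ∧ j = j') ∧
    I' = I ∪ {f' | ∃ f ∈ I, CloneFact chosen m κ f f'}

/-- The instance obtained from `D` by cloning every constant of `F` exactly
`m` times, with clone constants given by `κ`. -/
def cloneBy {S : Schema} {C : Type} (F : Set C) (m : ℕ) (κ : C → ℕ → C)
    (D : Inst S C) : Inst S C :=
  D ∪ {f' | ∃ f ∈ D, CloneFact F (fun _ => m) κ f f'}

/-- A constant is an `F`-copy if it belongs to `F` or is one of the first `m`
clones of a constant of `F`. -/
def IsFCopy {C : Type} (F : Set C) (m : ℕ) (κ : C → ℕ → C) (c : C) : Prop :=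
  c ∈ F ∨ ∃ c₀ ∈ F, ∃ j, 1 ≤ j ∧ j ≤ m ∧ c = κ c₀ j


def Fact.map {S : Schema} {C D : Type} (ρ : C → D) (f : Fact S C) : Fact S D :=
  ⟨f.1, ρ ∘ f.2⟩

def TGD.bodyVars {S : Schema} (T : TGD S) : Set (T.X ⊕ T.Y) :=
  {v | ∃ A ∈ T.body, ∃ i, A.2 i = v}

section Homomorphisms

variable {S : Schema} {C : Type} {T : TGD S}

theorem TGD.body_mem_of_mapsTo {I J : Inst S C} {ρ : C → C} (hρ : Set.MapsTo (Fact.map ρ) J I)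
    {a : T.X → C} {b : T.Y → C} (hbody : ∀ A ∈ T.body, A.map (Sum.elim a b) ∈ J) :
    ∀ A ∈ T.body, A.map (Sum.elim (ρ ∘ a) (ρ ∘ b)) ∈ I := by
  intro A hA
  rw [← Sum.comp_elim]
  exact hρ (hbody A hA)

theorem TGD.body_mem_of_guard_mem {I J : Inst S C} {ρ : C → C}
    (hρ : Set.MapsTo (Fact.map ρ) J I) (hfix : ∀ x ∈ adom I, ρ x = x)
    {G : Fact S (T.X ⊕ T.Y)} (hguard : T.bodyVars ⊆ Set.range G.2)
    {a : T.X → C} {b : T.Y → C} (hbody : ∀ A ∈ T.body, A.map (Sum.elim a b) ∈ J)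
    (hG : G.map (Sum.elim a b) ∈ I) :
    ∀ A ∈ T.body, A.map (Sum.elim a b) ∈ I := by
  intro A hA
  have hfixA : ρ ∘ Sum.elim a b ∘ A.2 = Sum.elim a b ∘ A.2 := by
    funext i
    obtain ⟨k, hk⟩ := hguard ⟨A, hA, i, rfl⟩
    exact hfix _ ⟨_, hG, k, by simp [Fact.map, hk]⟩
  have := hρ (hbody A hA)
  rwa [Fact.map, Fact.map, hfixA] at this

theorem TGD.mem_adom_of_notMem_bodyVars {I : Inst S C} (hI : tgdSat I T)
    {a : T.X → C} {b : T.Y → C} (hbody : ∀ A ∈ T.body, A.map (Sum.elim a b) ∈ I)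
    {A : Fact S (T.X ⊕ T.Z)} (hA : A ∈ T.head) {i : Fin (S.ar A.1)} {x : T.X}
    (hAi : A.2 i = Sum.inl x) (hx : Sum.inl x ∉ T.bodyVars) (c : C) : c ∈ adom I := by
  classical
  -- `x` is unconstrained by the body, so it may be sent to `c`.
  have hbody' : ∀ B ∈ T.body, B.map (Sum.elim (Function.update a x c) b) ∈ I := by
    intro B hB
    have hB' : Sum.elim (Function.update a x c) b ∘ B.2 = Sum.elim a b ∘ B.2 := by
      funext k
      change Sum.elim (Function.update a x c) b (B.2 k) = Sum.elim a b (B.2 k)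
      rcases hBk : B.2 k with x' | y
      · have hne : x' ≠ x := by rintro rfl; exact hx ⟨B, hB, k, hBk⟩
        exact Function.update_of_ne hne _ _
      · rfl
    simpa only [Fact.map, hB'] using hbody B hB
  obtain ⟨z, hz⟩ := hI _ _ hbody'
  exact ⟨_, hz A hA, i, by simp only [Function.comp_apply, hAi, Sum.elim_inl, Function.update_self]⟩

end Homomorphisms

def cloneSet {C : Type} (chosen : Set C) (m : C → ℕ) (κ : C → ℕ → C) : Set C :=
  {x | ∃ c ∈ chosen, ∃ j, 1 ≤ j ∧ j ≤ m c ∧ x = κ c j}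

/-- `CloneFact` is, definitionally, this relation at every position. -/
def IsCloneEntry {C : Type} (chosen : Set C) (m : C → ℕ) (κ : C → ℕ → C) (c c' : C) : Prop :=
  (c ∉ chosen ∧ c' = c) ∨ (c ∈ chosen ∧ ∃ j, 1 ≤ j ∧ j ≤ m c ∧ c' = κ c j)

noncomputable def unclone {C : Type} (chosen : Set C) (m : C → ℕ) (κ : C → ℕ → C) (x : C) : C :=
  open Classical in
  if h : ∃ c ∈ chosen, ∃ j, 1 ≤ j ∧ j ≤ m c ∧ x = κ c j then h.choose else x

section Cloning

variable {S : Schema} {C : Type} {chosen : Set C} {m : C → ℕ} {κ : C → ℕ → C}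

theorem unclone_of_notMem_cloneSet {x : C} (hx : x ∉ cloneSet chosen m κ) :
    unclone chosen m κ x = x :=
  dif_neg hx

theorem unclone_of_mem_adom {I : Inst S C}
    (hfresh : ∀ c ∈ chosen, ∀ j, 1 ≤ j → j ≤ m c → κ c j ∉ adom I) {x : C} (hx : x ∈ adom I) :
    unclone chosen m κ x = x :=
  unclone_of_notMem_cloneSet fun ⟨c, hc, j, hj1, hj2, hxc⟩ => hfresh c hc j hj1 hj2 (hxc ▸ hx)

theorem unclone_clone
    (hinj : ∀ c ∈ chosen, ∀ c' ∈ chosen, ∀ j j', 1 ≤ j → j ≤ m c → 1 ≤ j' → j' ≤ m c' →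
      κ c j = κ c' j' → c = c' ∧ j = j')
    {c : C} (hc : c ∈ chosen) {j : ℕ} (hj1 : 1 ≤ j) (hj2 : j ≤ m c) :
    unclone chosen m κ (κ c j) = c := by
  have h : ∃ c' ∈ chosen, ∃ j', 1 ≤ j' ∧ j' ≤ m c' ∧ κ c j = κ c' j' := ⟨c, hc, j, hj1, hj2, rfl⟩
  obtain ⟨hc', j', hj1', hj2', heq⟩ := h.choose_spec
  rw [unclone, dif_pos h]
  exact (hinj c hc _ hc' j j' hj1 hj2 hj1' hj2' heq).1.symm

theorem IsCloneEntry.mem_compl_union {c c' : C} (h : IsCloneEntry chosen m κ c c') :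
    c' ∈ chosenᶜ ∪ cloneSet chosen m κ := by
  rcases h with ⟨hc, rfl⟩ | ⟨hc, j, hj1, hj2, rfl⟩
  · exact Or.inl hc
  · exact Or.inr ⟨c, hc, j, hj1, hj2, rfl⟩

theorem CloneFact.mem_compl_union {f f' : Fact S C} (h : CloneFact chosen m κ f f')
    (i : Fin (S.ar f'.1)) : f'.2 i ∈ chosenᶜ ∪ cloneSet chosen m κ := by
  obtain ⟨t', rfl, ht⟩ := h
  exact IsCloneEntry.mem_compl_union (ht i)

theorem IsCloneEntry.unclone_eq {I : Inst S C}
    (hfresh : ∀ c ∈ chosen, ∀ j, 1 ≤ j → j ≤ m c → κ c j ∉ adom I)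
    (hinj : ∀ c ∈ chosen, ∀ c' ∈ chosen, ∀ j j', 1 ≤ j → j ≤ m c → 1 ≤ j' → j' ≤ m c' →
      κ c j = κ c' j' → c = c' ∧ j = j')
    {c c' : C} (hc : c ∈ adom I) (h : IsCloneEntry chosen m κ c c') :
    unclone chosen m κ c' = c := by
  rcases h with ⟨-, rfl⟩ | ⟨hc, j, hj1, hj2, rfl⟩
  · exact unclone_of_mem_adom hfresh hc
  · exact unclone_clone hinj hc hj1 hj2

theorem isCloneEntry_unclone
    (hinj : ∀ c ∈ chosen, ∀ c' ∈ chosen, ∀ j j', 1 ≤ j → j ≤ m c → 1 ≤ j' → j' ≤ m c' →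
      κ c j = κ c' j' → c = c' ∧ j = j')
    {x : C} (hx : x ∈ chosenᶜ ∪ cloneSet chosen m κ) :
    IsCloneEntry chosen m κ (unclone chosen m κ x) x := by
  by_cases hcl : x ∈ cloneSet chosen m κ
  · obtain ⟨c, hc, j, hj1, hj2, rfl⟩ := hcl
    rw [unclone_clone hinj hc hj1 hj2]
    exact Or.inr ⟨hc, j, hj1, hj2, rfl⟩
  · rw [unclone_of_notMem_cloneSet hcl]
    exact Or.inl ⟨hx.resolve_right hcl, rfl⟩

theorem isCloneEntry_ite [DecidablePred (· ∈ chosen)] {c : C} (hm : c ∈ chosen → 1 ≤ m c) :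
    IsCloneEntry chosen m κ c (if c ∈ chosen then κ c 1 else c) := by
  by_cases hc : c ∈ chosen
  · exact Or.inr ⟨hc, 1, le_rfl, hm hc, if_pos hc⟩
  · exact Or.inl ⟨hc, if_neg hc⟩

theorem cloneFact_map {V : Type} {A : Fact S V} {σ τ : V → C}
    (h : ∀ i, IsCloneEntry chosen m κ (σ (A.2 i)) (τ (A.2 i))) :
    CloneFact chosen m κ (A.map σ) (A.map τ) :=
  ⟨τ ∘ A.2, rfl, h⟩

theorem mapsTo_unclone {I : Inst S C}
    (hfresh : ∀ c ∈ chosen, ∀ j, 1 ≤ j → j ≤ m c → κ c j ∉ adom I)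
    (hinj : ∀ c ∈ chosen, ∀ c' ∈ chosen, ∀ j j', 1 ≤ j → j ≤ m c → 1 ≤ j' → j' ≤ m c' →
      κ c j = κ c' j' → c = c' ∧ j = j') :
    Set.MapsTo (Fact.map (unclone chosen m κ))
      (I ∪ {f' | ∃ f ∈ I, CloneFact chosen m κ f f'}) I := by
  rintro f (hf | ⟨g, hg, t', rfl, ht⟩)
  · have hfix : unclone chosen m κ ∘ f.2 = f.2 :=
      funext fun i => unclone_of_mem_adom hfresh ⟨f, hf, i, rfl⟩
    simpa only [Fact.map, hfix] using hf
  · have hfix : unclone chosen m κ ∘ t' = g.2 :=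
      funext fun i => IsCloneEntry.unclone_eq hfresh hinj ⟨g, hg, i, rfl⟩ (ht i)
    simpa only [Fact.map, hfix] using hg

end Cloning

theorem statement9 (S : Schema) (T : TGD S) (hg : T.IsGuarded) (C : Type)
    (I I' : Inst S C) (hI : tgdSat I T) (hclone : IsCloneOf I I') :
    tgdSat I' T := by
  classical
  obtain ⟨chosen, m, κ, -, -, hm, hfresh, hinj, rfl⟩ := hclone
  have hρ := mapsTo_unclone hfresh hinj
  intro a b hbody
  rcases hg with hempty | ⟨G, hG, hguard⟩
  · obtain ⟨c, hc⟩ := hI a b (by simp [hempty])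
    exact ⟨c, fun A hA => Or.inl (hc A hA)⟩
  rcases hbody G hG with hGI | ⟨g, -, hGg⟩
  · obtain ⟨c, hc⟩ := hI a b
      (T.body_mem_of_guard_mem hρ (fun _ => unclone_of_mem_adom hfresh) hguard hbody hGI)
    exact ⟨c, fun A hA => Or.inl (hc A hA)⟩
  -- the guard atom is a proper clone, and it carries every body variable
  have hbodyVals : ∀ v ∈ T.bodyVars, Sum.elim a b v ∈ chosenᶜ ∪ cloneSet chosen m κ := by
    intro v hv
    obtain ⟨k, rfl⟩ := hguard v hv
    exact hGg.mem_compl_union k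
  have hbodyI := T.body_mem_of_mapsTo hρ hbody
  obtain ⟨c₀, hc₀⟩ := hI _ _ hbodyI
  refine ⟨fun z => if c₀ z ∈ chosen then κ (c₀ z) 1 else c₀ z,
    fun A hA => Or.inr ⟨_, hc₀ A hA, cloneFact_map fun i => ?_⟩⟩
  rcases hAi : A.2 i with x | z
  · refine isCloneEntry_unclone hinj ?_
    by_cases hx : Sum.inl x ∈ T.bodyVars
    · exact hbodyVals _ hx
    -- otherwise `I` would contain every constant, the fresh clone `κ (a x) 1` included
    by_contra hax
    have hchosen : a x ∈ chosen := not_not.mp fun h => hax (Or.inl h)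
    exact hfresh _ hchosen 1 le_rfl (hm _ hchosen)
      (T.mem_adom_of_notMem_bodyVars hI hbodyI hA hAi hx _)
  · exact isCloneEntry_ite (hm _)

end DB
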